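/- Let A and B be associative unital ℂ-algebras, let M be a simple A-module whose dimension over ℂ is countable, and let N be a simple B-module whose dimension over ℂ is countable. Then the tensor product M ⊗[ℂ] N, with the A ⊗[ℂ] B-module structure determined by (a ⊗ b) · (m ⊗ n) = (a · m) ⊗ (b · n), is a simple A ⊗[ℂ] B-module. -/

import Mathlib

open scoped TensorProduct

/-!
By Schur's lemma `End_A M` is a division `ℂ`-algebra, and evaluation at a nonzero vector embeds
it in `M`, so its dimension is countable, hence below `#ℂ = 𝔠`. A transcendental element `d`
would give the `𝔠` linearly independent elements `(d - c)⁻¹`, `c ∈ ℂ`; so `End_A M` is algebraic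
over `ℂ`, hence equal to `ℂ` (Dixmier's lemma).

Let `P` be a nonzero submodule of `M ⊗ N`. In coordinates `t = ∑ⱼ mⱼ ⊗ bⱼ` for a `ℂ`-basis `b`
of `N`, pick `t ∈ P` with the fewest nonzero coordinates and one of them, `m₀`. If `a • m₀ = 0`
then `(a ⊗ 1) • t ∈ P` has fewer nonzero coordinates, so it vanishes; hence `a • m₀ ↦ a • mⱼ`
is a well-defined endomorphism of `M`, a scalar `cⱼ`. So `t = m₀ ⊗ ∑ⱼ cⱼ bⱼ` is a nonzero pure
tensor, and as `M` and `N` are simple, `A ⊗ B` moves it to every pure tensor.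
-/

open Cardinal

universe u v

section Dixmier

variable {k : Type u} [Field k]

theorem Subalgebra.isField_centralizer_centralizer {D : Type v} [DivisionRing D] [Algebra k D]
    {s : Set D} (hs : ∀ x ∈ s, ∀ y ∈ s, x * y = y * x) :
    IsField (Subalgebra.centralizer k s.centralizer) where
  exists_pair_ne := ⟨0, 1, zero_ne_one⟩
  mul_comm x y := Subtype.ext <| Set.centralizer_centralizer_comm_of_comm hs _ x.2 _ y.2
  mul_inv_cancel {x} hx :=
    ⟨⟨x⁻¹, Set.inv_mem_centralizer₀ x.2⟩, Subtype.ext <| mul_inv_cancel₀ <| by simpa using hx⟩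

theorem DivisionRing.isAlgebraic_of_rank_lt_card {D : Type v} [DivisionRing D] [Algebra k D]
    (h : lift.{u} (Module.rank k D) < lift.{v} #k) : Algebra.IsAlgebraic k D := by
  refine ⟨fun d => not_not.mp fun hd => h.not_ge ?_⟩
  -- `linearIndependent_sub_inv` needs a field: use the double centralizer of `d`.
  let E := Subalgebra.centralizer k (Set.centralizer {d})
  let : Field E := (Subalgebra.isField_centralizer_centralizer (s := {d}) (by simp)).toField
  have hdE : d ∈ E := Set.subset_centralizer_centralizer rfl
  have hE : Transcendental k (⟨d, hdE⟩ : E) := fun h' => hd (h'.algHom E.val)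
  calc lift.{v} #k ≤ lift.{u} (Module.rank k E) :=
        hE.linearIndependent_sub_inv.cardinal_lift_le_rank
    _ ≤ lift.{u} (Module.rank k D) := lift_le.mpr (Submodule.rank_le (Subalgebra.toSubmodule E))

theorem IsSimpleModule.algebraMap_end_bijective_of_rank_lt_card [IsAlgClosed k]
    {A : Type*} {V : Type v} [Ring A] [Algebra k A] [AddCommGroup V] [Module k V] [Module A V]
    [IsScalarTower k A V] [IsSimpleModule A V] (h : lift.{u} (Module.rank k V) < lift.{v} #k) :
    Function.Bijective (algebraMap k (Module.End A V)) := by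
  classical
  have : Nontrivial V := IsSimpleModule.nontrivial A V
  obtain ⟨v₀, hv₀⟩ := exists_ne (0 : V)
  let ev : Module.End A V →ₗ[k] V :=
    (LinearMap.applyₗ v₀).comp (LinearMap.restrictScalarsₗ k A V V k)
  have hev : Function.Injective ev := (injective_iff_map_eq_zero ev).mpr fun f hf =>
    f.injective_or_eq_zero.resolve_left fun hinj => hv₀ (hinj (hf.trans f.map_zero.symm))
  have : Algebra.IsAlgebraic k (Module.End A V) := DivisionRing.isAlgebraic_of_rank_lt_card <|
    (lift_le.mpr (LinearMap.rank_le_of_injective ev hev)).trans_lt h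
  exact IsAlgClosed.algebraMap_bijective_of_isIntegral

end Dixmier

theorem LinearMap.exists_apply_eq_of_smul_eq_zero_imp {A M M' : Type*} [Ring A]
    [AddCommGroup M] [Module A M] [AddCommGroup M'] [Module A M'] {m₀ : M}
    (hm₀ : Function.Surjective (LinearMap.toSpanSingleton A M m₀)) {m : M'}
    (h : ∀ a : A, a • m₀ = 0 → a • m = 0) : ∃ f : M →ₗ[A] M', f m₀ = m := by
  let e := (LinearMap.toSpanSingleton A M m₀).quotKerEquivOfSurjective hm₀
  have hker : LinearMap.ker (LinearMap.toSpanSingleton A M m₀) ≤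
      LinearMap.ker (LinearMap.toSpanSingleton A M' m) := fun a => h a
  refine ⟨(LinearMap.ker _).liftQ _ hker ∘ₗ e.symm.toLinearMap, ?_⟩
  have : e.symm m₀ = Submodule.Quotient.mk 1 := e.symm_apply_eq.mpr (one_smul A m₀).symm
  simp [this]

section SimpleTensor

variable {A M : Type*} [Ring A] [AddCommGroup M] [Module A M] [IsSimpleModule A M]

theorem Submodule.exists_ne_zero_mem_forall_apply_eq_end_apply {ι : Type*}
    {P : Submodule A (ι →₀ M)} (hP : P ≠ ⊥) :
    ∃ x ∈ P, x ≠ 0 ∧ ∃ m₀ : M, ∀ j, ∃ f : Module.End A M, x j = f m₀ := by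
  classical
  obtain ⟨x, ⟨hxP, hx0⟩, hmin⟩ := (measure fun x : ι →₀ M => x.support.card).wf.has_min
    {x | x ∈ P ∧ x ≠ 0} (P.ne_bot_iff.mp hP)
  obtain ⟨j₀, hj₀⟩ := Finsupp.support_nonempty_iff.mpr hx0
  have hkill (a : A) (ha : a • x j₀ = 0) : a • x = 0 := by
    by_contra hne
    refine hmin (a • x) ⟨P.smul_mem a hxP, hne⟩ ((Finset.card_le_card fun j hj => ?_).trans_lt
      (Finset.card_erase_lt_of_mem hj₀))
    refine Finset.mem_erase.mpr ⟨?_, Finsupp.support_smul hj⟩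
    rintro rfl
    exact Finsupp.mem_support_iff.mp hj ha
  refine ⟨x, hxP, hx0, x j₀, fun j => ?_⟩
  obtain ⟨f, hf⟩ := LinearMap.exists_apply_eq_of_smul_eq_zero_imp
    (IsSimpleModule.toSpanSingleton_surjective A (Finsupp.mem_support_iff.mp hj₀)) (m := x j)
    fun a ha => by simpa using congr($(hkill a ha) j)
  exact ⟨f, hf.symm⟩

variable {k N : Type*} [Field k] [Algebra k A] [Module k M] [AddCommGroup N] [Module k N]

theorem TensorProduct.exists_tmul_ne_zero_mem_of_ne_bot [IsScalarTower k A M]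
    (hM : Function.Surjective (algebraMap k (Module.End A M)))
    {P : Submodule A (M ⊗[k] N)} (hP : P ≠ ⊥) : ∃ m n, m ⊗ₜ[k] n ≠ 0 ∧ m ⊗ₜ[k] n ∈ P := by
  let b := Module.Free.chooseBasis k N
  let Φ : M ⊗[k] N ≃ₗ[A] _ := (AlgebraTensorModule.congr (LinearEquiv.refl A M) b.repr).trans
    (finsuppScalarRight k A M _)
  have hPΦ : P.map Φ.toLinearMap ≠ ⊥ := Submodule.map_eq_bot_iff.not.mpr hP
  obtain ⟨_, ⟨t, htP, rfl⟩, ht0, m₀, hcoord⟩ :=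
    Submodule.exists_ne_zero_mem_forall_apply_eq_end_apply hPΦ
  have hscalar (j) : ∃ c : k, Φ t j = c • m₀ := by
    obtain ⟨f, hf⟩ := hcoord j
    obtain ⟨c, rfl⟩ := hM f
    exact ⟨c, hf⟩
  choose c hc using hscalar
  have ht : t = m₀ ⊗ₜ ∑ j ∈ (Φ t).support, c j • b j := by
    conv_lhs => rw [← Φ.symm_apply_apply t, ← (Φ t).sum_single, Finsupp.sum, map_sum]
    have hsingle (j) (m : M) : Φ.symm (Finsupp.single j m) = m ⊗ₜ b j := by simp [Φ]
    simp only [hsingle, hc, smul_tmul, tmul_sum]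
  exact ⟨m₀, _, ht ▸ (by simpa using ht0), ht ▸ htP⟩

variable {B : Type*} [Ring B] [Algebra k B] [Module B N] [IsSimpleModule B N]
  [Module (A ⊗[k] B) (M ⊗[k] N)]
  (hsmul : ∀ (a : A) (b : B) (m : M) (n : N), (a ⊗ₜ[k] b) • (m ⊗ₜ[k] n) = (a • m) ⊗ₜ[k] (b • n))
include hsmul

theorem Submodule.eq_top_of_tmul_mem {P : Submodule (A ⊗[k] B) (M ⊗[k] N)} {m : M} {n : N}
    (hmn : m ⊗ₜ[k] n ≠ 0) (h : m ⊗ₜ[k] n ∈ P) : P = ⊤ := by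
  have hm : m ≠ 0 := by rintro rfl; simp at hmn
  have hn : n ≠ 0 := by rintro rfl; simp at hmn
  have htmul (m' : M) (n' : N) : m' ⊗ₜ[k] n' ∈ P := by
    obtain ⟨a, rfl⟩ := IsSimpleModule.toSpanSingleton_surjective A hm m'
    obtain ⟨b, rfl⟩ := IsSimpleModule.toSpanSingleton_surjective B hn n'
    simpa [hsmul] using P.smul_mem (a ⊗ₜ[k] b) h
  refine Submodule.eq_top_iff'.mpr fun x => ?_
  induction x using TensorProduct.induction_on with
  | zero => exact P.zero_mem
  | tmul m' n' => exact htmul m' n'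
  | add x y hx hy => exact P.add_mem hx hy

theorem TensorProduct.isSimpleModule_of_algebraMap_end_surjective [IsScalarTower k A M]
    (hM : Function.Surjective (algebraMap k (Module.End A M))) :
    IsSimpleModule (A ⊗[k] B) (M ⊗[k] N) := by
  have hleft (a : A) (x : M ⊗[k] N) : (a ⊗ₜ[k] (1 : B)) • x = a • x := by
    induction x using TensorProduct.induction_on with
    | zero => simp
    | tmul m n => rw [hsmul, one_smul, smul_tmul']
    | add x y hx hy => rw [smul_add, smul_add, hx, hy]
  have : Nontrivial M := IsSimpleModule.nontrivial A M
  have : Nontrivial N := IsSimpleModule.nontrivial B N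
  refine (isSimpleModule_iff ..).mpr ⟨fun P => or_iff_not_imp_left.mpr fun hP => ?_⟩
  let P' : Submodule A (M ⊗[k] N) :=
    { P.toAddSubmonoid with smul_mem' := fun a x hx => hleft a x ▸ P.smul_mem _ hx }
  obtain ⟨m, n, hmn, hmem⟩ :=
    exists_tmul_ne_zero_mem_of_ne_bot hM (P := P') (P'.ne_bot_iff.mpr (P.ne_bot_iff.mp hP))
  exact Submodule.eq_top_of_tmul_mem hsmul hmn hmem

end SimpleTensor

theorem simple_tensor_of_countable_dim_simple_general
    (A B M N : Type*)
    [Ring A] [Algebra ℂ A] [Ring B] [Algebra ℂ B]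
    [AddCommGroup M] [Module ℂ M] [Module A M] [IsScalarTower ℂ A M]
    [AddCommGroup N] [Module ℂ N] [Module B N]
    [Module (A ⊗[ℂ] B) (M ⊗[ℂ] N)]
    (hsmul : ∀ (a : A) (b : B) (m : M) (n : N),
      (a ⊗ₜ[ℂ] b) • (m ⊗ₜ[ℂ] n) = (a • m) ⊗ₜ[ℂ] (b • n))
    (hM : IsSimpleModule A M) (hMdim : Module.rank ℂ M ≤ Cardinal.aleph0)
    (hN : IsSimpleModule B N) :
    IsSimpleModule (A ⊗[ℂ] B) (M ⊗[ℂ] N) := by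
  have hrank : lift.{0} (Module.rank ℂ M) < lift #ℂ := by
    rw [mk_complex, lift_continuum]
    exact (lift_le_aleph0.mpr hMdim).trans_lt aleph0_lt_continuum
  exact TensorProduct.isSimpleModule_of_algebraMap_end_surjective hsmul
    (IsSimpleModule.algebraMap_end_bijective_of_rank_lt_card hrank).2

/-- Let `A`, `B` be associative unital `ℂ`-algebras, `M` a simple `A`-module
of countable dimension over `ℂ`, and `N` a simple `B`-module of countable dimension over `ℂ`.
Then `M ⊗[ℂ] N`, with the `A ⊗[ℂ] B`-module structure determined by
`(a ⊗ b) • (m ⊗ n) = (a • m) ⊗ (b • n)`, is a simple `A ⊗[ℂ] B`-module. -/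
theorem simple_tensor_of_countable_dim_simple
    (A B M N : Type*)
    [Ring A] [Algebra ℂ A] [Ring B] [Algebra ℂ B]
    [AddCommGroup M] [Module ℂ M] [Module A M] [IsScalarTower ℂ A M]
    [AddCommGroup N] [Module ℂ N] [Module B N] [IsScalarTower ℂ B N]
    [Module (A ⊗[ℂ] B) (M ⊗[ℂ] N)]
    (hsmul : ∀ (a : A) (b : B) (m : M) (n : N),
      (a ⊗ₜ[ℂ] b) • (m ⊗ₜ[ℂ] n) = (a • m) ⊗ₜ[ℂ] (b • n))
    (hM : IsSimpleModule A M) (hMdim : Module.rank ℂ M ≤ Cardinal.aleph0)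
    (hN : IsSimpleModule B N) (hNdim : Module.rank ℂ N ≤ Cardinal.aleph0) :
    IsSimpleModule (A ⊗[ℂ] B) (M ⊗[ℂ] N) :=
  simple_tensor_of_countable_dim_simple_general A B M N hsmul hM hMdim hN
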